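/- Suppose r* = s* and: (i) p and q have no common real root in S, and (ii) the degree-d homogeneous parts p_d and q_d of p and q have no common nonzero real root in Ŝ = {x ∈ ℝⁿ : ĥᵢ(x) = 0, ĝⱼ(x) ≥ 0}, where ĥᵢ, ĝⱼ are the top-degree homogeneous parts of hᵢ, gⱼ. Then the infimum s* of the homogenized problem min{p̃(x̃) : x̃ ∈ S̃, q̃(x̃) = 1} is attained. -/

import Mathlib

/-!
The homogenized problem minimizes the degree-`d` form `P` over the closed cone `S̃` cut by
`Q = 1`. Hypotheses (i) and (ii) say exactly that `P` and `Q` have no common zero on `S̃ ∖ {0}`: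
at a point with `x₀ > 0` the forms dehomogenize to `p, q` on `S`, and at a point with `x₀ = 0`
they restrict to the top-degree parts `p_d, q_d` on `Ŝ`. Hence `|P| + |Q|` is bounded below by
some `ε > 0` on the compact unit sphere of `S̃`, and by homogeneity `|P y| + |Q y| ≥ ε ‖y‖ ^ d`
on `S̃`. On the feasible set `Q = 1` this makes `P` coercive, so it attains its infimum.
(For `d = 0` the form `P` is constant.)
-/

open MvPolynomial Filter Topology

namespace MvPolynomial

theorem IsHomogeneous.eval_smul {σ R : Type*} [CommSemiring R] {φ : MvPolynomial σ R} {m : ℕ}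
    (hφ : φ.IsHomogeneous m) (c : R) (x : σ → R) : eval (c • x) φ = c ^ m * eval x φ := by
  rw [eval_eq, eval_eq, Finset.mul_sum]
  refine Finset.sum_congr rfl fun s hs => ?_
  have hdeg : ∑ i ∈ s.support, s i = m := by
    simpa [Finsupp.weight_apply, Finsupp.sum] using hφ (mem_support_iff.mp hs)
  simp only [Pi.smul_apply, smul_eq_mul, mul_pow, Finset.prod_mul_distrib,
    Finset.prod_pow_eq_pow_sum, hdeg]
  ring

theorem eval_smul_eq_sum_homogeneousComponent {σ R : Type*} [CommSemiring R]
    {f : MvPolynomial σ R} {m : ℕ} (hf : f.totalDegree ≤ m) (c : R) (x : σ → R) :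
    eval (c • x) f = ∑ k ∈ Finset.range (m + 1), c ^ k * eval x (homogeneousComponent k f) := by
  have hsum : ∑ k ∈ Finset.range (m + 1), homogeneousComponent k f = f := by
    rw [← Finset.sum_subset (Finset.range_subset_range.2 (Nat.succ_le_succ hf)),
      sum_homogeneousComponent]
    intro k _ hk
    exact homogeneousComponent_eq_zero _ _ (by simpa using hk)
  conv_lhs => rw [← hsum]
  simp only [map_sum, (homogeneousComponent_isHomogeneous _ _).eval_smul]

section Homogenization

variable {n m : ℕ}

def IsHomogenization {R : Type*} [CommSemiring R] (F : MvPolynomial (Fin (n + 1)) R)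
    (f : MvPolynomial (Fin n) R) (m : ℕ) : Prop :=
  F.IsHomogeneous m ∧ ∀ x, eval (Fin.cons 1 x) F = eval x f

theorem IsHomogenization.eval_eq_pow_mul {K : Type*} [Field K]
    {F : MvPolynomial (Fin (n + 1)) K} {f : MvPolynomial (Fin n) K} (hF : IsHomogenization F f m)
    {y : Fin (n + 1) → K} (hy : y 0 ≠ 0) :
    eval y F = y 0 ^ m * eval ((y 0)⁻¹ • Fin.tail y) f := by
  have hy_eq : y = y 0 • Fin.cons 1 ((y 0)⁻¹ • Fin.tail y) := by
    ext i
    refine Fin.cases ?_ (fun j => ?_) i <;> simp [hy, Fin.tail]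
  rw [← hF.2, ← hF.1.eval_smul, ← hy_eq]

theorem IsHomogenization.eval_eq_zero_iff {K : Type*} [Field K]
    {F : MvPolynomial (Fin (n + 1)) K} {f : MvPolynomial (Fin n) K} (hF : IsHomogenization F f m)
    {y : Fin (n + 1) → K} (hy : y 0 ≠ 0) :
    eval y F = 0 ↔ eval ((y 0)⁻¹ • Fin.tail y) f = 0 := by
  simp [hF.eval_eq_pow_mul hy, hy]

theorem IsHomogenization.eval_nonneg_iff {F : MvPolynomial (Fin (n + 1)) ℝ}
    {f : MvPolynomial (Fin n) ℝ} (hF : IsHomogenization F f m) {y : Fin (n + 1) → ℝ}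
    (hy : 0 < y 0) : 0 ≤ eval y F ↔ 0 ≤ eval ((y 0)⁻¹ • Fin.tail y) f := by
  rw [hF.eval_eq_pow_mul hy.ne', mul_nonneg_iff_of_pos_left (pow_pos hy m)]

theorem IsHomogenization.eval_cons_zero {F : MvPolynomial (Fin (n + 1)) ℝ}
    {f : MvPolynomial (Fin n) ℝ} (hF : IsHomogenization F f m) (hf : f.totalDegree ≤ m)
    (x : Fin n → ℝ) : eval (Fin.cons 0 x) F = eval x (homogeneousComponent m f) := by
  set a : ℕ → ℝ := fun k => eval x (homogeneousComponent k f)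
  -- Away from `t = 0`, `t ↦ F (t, x)` is the polynomial `∑ t ^ (m - k) a k`; extend by continuity.
  have hext : (fun t : ℝ => eval (Fin.cons t x) F) =
      fun t => ∑ k ∈ Finset.range (m + 1), t ^ (m - k) * a k := by
    refine Continuous.ext_on (dense_compl_singleton 0)
      ((continuous_eval F).comp (by fun_prop)) (by fun_prop)
      fun t (ht : t ≠ 0) => ?_
    simp only [hF.eval_eq_pow_mul (y := Fin.cons t x) ht, Fin.cons_zero, Fin.tail_cons,
      eval_smul_eq_sum_homogeneousComponent hf, Finset.mul_sum]
    refine Finset.sum_congr rfl fun k hk => ?_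
    rw [← mul_assoc, inv_pow, ← div_eq_mul_inv,
      pow_sub₀ t ht (Nat.lt_succ_iff.mp (Finset.mem_range.mp hk)), div_eq_mul_inv]
  rw [congrFun hext 0, Finset.sum_eq_single_of_mem m (by simp)]
  · simp [a]
  · intro k hk hkm
    rw [zero_pow (by have := Finset.mem_range.mp hk; omega), zero_mul]

end Homogenization

end MvPolynomial

section Coercive

variable {E : Type*} [NormedAddCommGroup E] [NormedSpace ℝ E] [ProperSpace E]
  {C : Set E} {P Q : E → ℝ} {d : ℕ}

theorem exists_pos_mul_norm_pow_le_abs_add_abs (hC : IsClosed C)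
    (hC_smul : ∀ c : ℝ, 0 < c → ∀ y ∈ C, c • y ∈ C) (hP : Continuous P) (hQ : Continuous Q)
    (hP_smul : ∀ (c : ℝ) y, P (c • y) = c ^ d * P y)
    (hQ_smul : ∀ (c : ℝ) y, Q (c • y) = c ^ d * Q y)
    (hno : ∀ y ∈ C, P y = 0 → Q y = 0 → y = 0) (hd : d ≠ 0) :
    ∃ ε > 0, ∀ y ∈ C, ε * ‖y‖ ^ d ≤ |P y| + |Q y| := by
  have hpos : ∀ v ∈ C ∩ Metric.sphere 0 1, 0 < |P v| + |Q v| := by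
    rintro v ⟨hvC, hv⟩
    have hv0 : v ≠ 0 := ne_zero_of_mem_unit_sphere ⟨v, hv⟩
    by_contra! hle
    exact hv0 (hno v hvC (abs_nonpos_iff.mp (by linarith [abs_nonneg (Q v)]))
      (abs_nonpos_iff.mp (by linarith [abs_nonneg (P v)])))
  obtain ⟨ε, hε, hεle⟩ := ((isCompact_sphere 0 1).inter_left hC).exists_forall_le'
    (by fun_prop) hpos
  refine ⟨ε, hε, fun y hy => ?_⟩
  rcases eq_or_ne y 0 with rfl | hy0
  · rw [norm_zero, zero_pow hd, mul_zero]
    positivity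
  have hnorm : 0 < ‖y‖ := norm_pos_iff.mpr hy0
  have hv : ‖y‖⁻¹ • y ∈ C ∩ Metric.sphere 0 1 :=
    ⟨hC_smul _ (inv_pos.mpr hnorm) y hy, by simp [norm_smul, hnorm.ne']⟩
  have hy_eq : y = ‖y‖ • ‖y‖⁻¹ • y := by rw [smul_smul, mul_inv_cancel₀ hnorm.ne', one_smul]
  calc ε * ‖y‖ ^ d ≤ (|P (‖y‖⁻¹ • y)| + |Q (‖y‖⁻¹ • y)|) * ‖y‖ ^ d := by
        gcongr; exact hεle _ hv
    _ = |P y| + |Q y| := by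
        conv_rhs => rw [hy_eq, hP_smul, hQ_smul]
        rw [abs_mul, abs_mul, abs_pow, abs_norm]
        ring

theorem IsGLB.mem_image_of_homogeneous_of_no_common_zero (hC : IsClosed C)
    (hC_smul : ∀ c : ℝ, 0 < c → ∀ y ∈ C, c • y ∈ C) (hP : Continuous P) (hQ : Continuous Q)
    (hP_smul : ∀ (c : ℝ) y, P (c • y) = c ^ d * P y)
    (hQ_smul : ∀ (c : ℝ) y, Q (c • y) = c ^ d * Q y)
    (hno : ∀ y ∈ C, P y = 0 → Q y = 0 → y = 0) {ρ : ℝ}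
    (hρ : IsGLB (P '' {y ∈ C | Q y = 1}) ρ) :
    ρ ∈ P '' {y ∈ C | Q y = 1} := by
  obtain ⟨_, ⟨y₀, hy₀, rfl⟩, -⟩ := hρ.exists_between (lt_add_one ρ)
  rcases eq_or_ne d 0 with rfl | hd
  · have hP0 : ∀ y, P y = P 0 := fun y => by simpa using (hP_smul 0 y).symm
    have hconst : P = fun _ => P y₀ := funext fun y => (hP0 y).trans (hP0 y₀).symm
    rw [hconst, Set.Nonempty.image_const ⟨y₀, hy₀⟩] at hρ ⊢
    exact (isGLB_singleton.unique hρ).symm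
  obtain ⟨ε, hε, hbound⟩ :=
    exists_pos_mul_norm_pow_le_abs_add_abs hC hC_smul hP hQ hP_smul hQ_smul hno hd
  have hcoercive : ∀ᶠ y in cocompact E ⊓ 𝓟 {y ∈ C | Q y = 1}, P y₀ ≤ P y := by
    have hlarge : ∀ᶠ y in cocompact E, |ρ| + |P y₀| + 1 < ε * ‖y‖ ^ d :=
      (((tendsto_pow_atTop hd).comp tendsto_norm_cocompact_atTop).const_mul_atTop
        hε).eventually_gt_atTop _
    filter_upwards [hlarge.filter_mono inf_le_left, mem_inf_of_right (mem_principal_self _)]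
      with y hy ⟨hyC, hyQ⟩
    by_contra! hlt
    have hρy : ρ ≤ P y := hρ.1 ⟨y, ⟨hyC, hyQ⟩, rfl⟩
    have hPy : |P y| ≤ |ρ| + |P y₀| :=
      abs_le.2 ⟨by linarith [neg_abs_le ρ, abs_nonneg (P y₀)],
        by linarith [le_abs_self (P y₀), abs_nonneg ρ]⟩
    have hyb := hbound y hyC
    rw [hyQ, abs_one] at hyb
    linarith
  obtain ⟨y, hy, hmin⟩ :=
    hP.continuousOn.exists_isMinOn' (hC.inter (isClosed_eq hQ continuous_const)) hy₀ hcoercive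
  have hleast : IsLeast (P '' {y ∈ C | Q y = 1}) (P y) :=
    ⟨Set.mem_image_of_mem P hy, Set.forall_mem_image.2 fun _ hx => hmin hx⟩
  exact hleast.isGLB.unique hρ ▸ Set.mem_image_of_mem P hy

end Coercive

section HomogenizedSet

variable {n : ℕ} {ι κ : Type*}

/-- The cone `S̃` of the homogenized problem. -/
def homogenizedSet (Hh : ι → MvPolynomial (Fin (n + 1)) ℝ)
    (Hg : κ → MvPolynomial (Fin (n + 1)) ℝ) : Set (Fin (n + 1) → ℝ) :=
  {y | (∀ i, eval y (Hh i) = 0) ∧ (∀ j, 0 ≤ eval y (Hg j)) ∧ 0 ≤ y 0}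

variable {Hh : ι → MvPolynomial (Fin (n + 1)) ℝ} {Hg : κ → MvPolynomial (Fin (n + 1)) ℝ}

theorem isClosed_homogenizedSet : IsClosed (homogenizedSet Hh Hg) := by
  simp only [homogenizedSet, Set.ofPred_and, Set.ofPred_forall]
  exact (isClosed_iInter fun i => isClosed_eq (continuous_eval (Hh i)) continuous_const).inter <|
    (isClosed_iInter fun j => isClosed_le continuous_const (continuous_eval (Hg j))).inter <|
      isClosed_le continuous_const (continuous_apply 0)

theorem smul_mem_homogenizedSet {a : ι → ℕ} {b : κ → ℕ} (hHh : ∀ i, (Hh i).IsHomogeneous (a i))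
    (hHg : ∀ j, (Hg j).IsHomogeneous (b j)) {c : ℝ} (hc : 0 < c) {y : Fin (n + 1) → ℝ}
    (hy : y ∈ homogenizedSet Hh Hg) : c • y ∈ homogenizedSet Hh Hg := by
  obtain ⟨hyh, hyg, hy0⟩ := hy
  refine ⟨fun i => ?_, fun j => ?_, ?_⟩
  · rw [(hHh i).eval_smul, hyh i, mul_zero]
  · rw [(hHg j).eval_smul]
    exact mul_nonneg (pow_nonneg hc.le _) (hyg j)
  · exact mul_nonneg hc.le hy0

theorem eq_zero_of_mem_homogenizedSet_of_eval_eq_zero {h : ι → MvPolynomial (Fin n) ℝ}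
    {g : κ → MvPolynomial (Fin n) ℝ} {p q : MvPolynomial (Fin n) ℝ}
    {P Q : MvPolynomial (Fin (n + 1)) ℝ} {d : ℕ}
    (hHh : ∀ i, IsHomogenization (Hh i) (h i) (h i).totalDegree)
    (hHg : ∀ j, IsHomogenization (Hg j) (g j) (g j).totalDegree)
    (hP : IsHomogenization P p d) (hQ : IsHomogenization Q q d)
    (hpd : p.totalDegree ≤ d) (hqd : q.totalDegree ≤ d)
    (hnoroot : ∀ x, (∀ i, eval x (h i) = 0) → (∀ j, 0 ≤ eval x (g j)) →
      eval x p = 0 → eval x q ≠ 0)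
    (hnoroothat : ∀ x, (∀ i, eval x (homogeneousComponent (h i).totalDegree (h i)) = 0) →
      (∀ j, 0 ≤ eval x (homogeneousComponent (g j).totalDegree (g j))) →
      eval x (homogeneousComponent d p) = 0 → eval x (homogeneousComponent d q) = 0 → x = 0)
    {y : Fin (n + 1) → ℝ} (hy : y ∈ homogenizedSet Hh Hg) (hPy : eval y P = 0)
    (hQy : eval y Q = 0) : y = 0 := by
  obtain ⟨hyh, hyg, hy0⟩ := hy
  rcases hy0.eq_or_lt with hy0 | hy0
  · have hy_eq : y = Fin.cons 0 (Fin.tail y) := by rw [hy0, Fin.cons_self_tail]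
    have htail : Fin.tail y = 0 := by
      refine hnoroothat _ (fun i => ?_) (fun j => ?_) ?_ ?_
      · rw [← (hHh i).eval_cons_zero le_rfl, ← hy_eq, hyh i]
      · rw [← (hHg j).eval_cons_zero le_rfl, ← hy_eq]
        exact hyg j
      · rw [← hP.eval_cons_zero hpd, ← hy_eq, hPy]
      · rw [← hQ.eval_cons_zero hqd, ← hy_eq, hQy]
    rw [hy_eq, htail]
    exact Matrix.cons_zero_zero
  · exact absurd ((hQ.eval_eq_zero_iff hy0.ne').1 hQy) <|
      hnoroot _ (fun i => (hHh i |>.eval_eq_zero_iff hy0.ne').1 (hyh i))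
        (fun j => (hHg j |>.eval_nonneg_iff hy0).1 (hyg j)) ((hP.eval_eq_zero_iff hy0.ne').1 hPy)

end HomogenizedSet

theorem homogenized_inf_attained_of_no_common_roots_general
    (n m₁ m₂ : ℕ)
    (p q : MvPolynomial (Fin n) ℝ)
    (h : Fin m₁ → MvPolynomial (Fin n) ℝ) (g : Fin m₂ → MvPolynomial (Fin n) ℝ)
    (d : ℕ) (hd : d = max p.totalDegree q.totalDegree)
    (P Q : MvPolynomial (Fin (n + 1)) ℝ)
    (hP : P.IsHomogeneous d)
    (hP1 : ∀ x : Fin n → ℝ, eval (Fin.cons 1 x) P = eval x p)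
    (hQ : Q.IsHomogeneous d)
    (hQ1 : ∀ x : Fin n → ℝ, eval (Fin.cons 1 x) Q = eval x q)
    (Hh : Fin m₁ → MvPolynomial (Fin (n + 1)) ℝ)
    (Hg : Fin m₂ → MvPolynomial (Fin (n + 1)) ℝ)
    (hHh : ∀ i, (Hh i).IsHomogeneous (h i).totalDegree)
    (hHh1 : ∀ i, ∀ x : Fin n → ℝ, eval (Fin.cons 1 x) (Hh i) = eval x (h i))
    (hHg : ∀ j, (Hg j).IsHomogeneous (g j).totalDegree)
    (hHg1 : ∀ j, ∀ x : Fin n → ℝ, eval (Fin.cons 1 x) (Hg j) = eval x (g j))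
    (sfeas : (Fin (n + 1) → ℝ) → Prop)
    (hsfeas : ∀ xt, sfeas xt ↔
      (∀ i, eval xt (Hh i) = 0) ∧ eval xt Q = 1 ∧
        (∀ j, 0 ≤ eval xt (Hg j)) ∧ 0 ≤ xt 0)
    (ρ : ℝ)
    (hs : IsGLB {v : ℝ | ∃ xt, sfeas xt ∧ v = eval xt P} ρ)
    -- (i): no common real root of p and q in S
    (hnoroot : ¬ ∃ x : Fin n → ℝ,
      ((∀ i, eval x (h i) = 0) ∧ (∀ j, 0 ≤ eval x (g j))) ∧
        eval x p = 0 ∧ eval x q = 0)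
    -- (ii): no common nonzero real root of p_d and q_d in Ŝ
    (hnoroothat : ¬ ∃ x : Fin n → ℝ, x ≠ 0 ∧
      ((∀ i, eval x (homogeneousComponent (h i).totalDegree (h i)) = 0) ∧
        (∀ j, 0 ≤ eval x (homogeneousComponent (g j).totalDegree (g j)))) ∧
      eval x (homogeneousComponent d p) = 0 ∧
        eval x (homogeneousComponent d q) = 0) :
    ∃ xt, sfeas xt ∧ eval xt P = ρ := by
  have hvalues : {v : ℝ | ∃ xt, sfeas xt ∧ v = eval xt P} =
      (eval · P) '' {y ∈ homogenizedSet Hh Hg | eval y Q = 1} := by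
    ext v
    simp only [hsfeas, homogenizedSet, Set.mem_ofPred_eq, Set.mem_image, eq_comm (a := v)]
    exact exists_congr fun y => and_congr_left' (by tauto)
  have hno : ∀ y ∈ homogenizedSet Hh Hg, eval y P = 0 → eval y Q = 0 → y = 0 :=
    fun y => eq_zero_of_mem_homogenizedSet_of_eval_eq_zero (fun i => ⟨hHh i, hHh1 i⟩)
      (fun j => ⟨hHg j, hHg1 j⟩) ⟨hP, hP1⟩ ⟨hQ, hQ1⟩ (hd ▸ le_max_left _ _) (hd ▸ le_max_right _ _)
      (fun x hxh hxg hxp hxq => hnoroot ⟨x, ⟨hxh, hxg⟩, hxp, hxq⟩)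
      (fun x hxh hxg hxp hxq => not_not.1 fun hx => hnoroothat ⟨x, hx, ⟨hxh, hxg⟩, hxp, hxq⟩)
  obtain ⟨y, ⟨⟨hyh, hyg, hy0⟩, hyQ⟩, hyP⟩ :=
    (hvalues ▸ hs).mem_image_of_homogeneous_of_no_common_zero isClosed_homogenizedSet
      (fun _ hc _ => smul_mem_homogenizedSet hHh hHg hc) (continuous_eval P) (continuous_eval Q)
      hP.eval_smul hQ.eval_smul hno
  exact ⟨y, (hsfeas y).2 ⟨hyh, hyQ, hyg, hy0⟩, hyP⟩

/-- if `r* = s* = ρ`, `p` and `q` have no common real root in `S`,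
and the degree-`d` homogeneous parts `p_d, q_d` have no common nonzero real root
in `Ŝ` (defined by the top-degree parts of the constraints), then `s*` is
attained. -/
theorem homogenized_inf_attained_of_no_common_roots
    (n m₁ m₂ : ℕ)
    (p q : MvPolynomial (Fin n) ℝ)
    (h : Fin m₁ → MvPolynomial (Fin n) ℝ) (g : Fin m₂ → MvPolynomial (Fin n) ℝ)
    (d : ℕ) (hd : d = max p.totalDegree q.totalDegree)
    (P Q : MvPolynomial (Fin (n + 1)) ℝ)
    (hP : P.IsHomogeneous d)
    (hP1 : ∀ x : Fin n → ℝ, eval (Fin.cons 1 x) P = eval x p)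
    (hQ : Q.IsHomogeneous d)
    (hQ1 : ∀ x : Fin n → ℝ, eval (Fin.cons 1 x) Q = eval x q)
    (Hh : Fin m₁ → MvPolynomial (Fin (n + 1)) ℝ)
    (Hg : Fin m₂ → MvPolynomial (Fin (n + 1)) ℝ)
    (hHh : ∀ i, (Hh i).IsHomogeneous (h i).totalDegree)
    (hHh1 : ∀ i, ∀ x : Fin n → ℝ, eval (Fin.cons 1 x) (Hh i) = eval x (h i))
    (hHg : ∀ j, (Hg j).IsHomogeneous (g j).totalDegree)
    (hHg1 : ∀ j, ∀ x : Fin n → ℝ, eval (Fin.cons 1 x) (Hg j) = eval x (g j))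
    (rfeas : (Fin n → ℝ) → Prop)
    (hrfeas : ∀ x, rfeas x ↔
      (∀ i, eval x (h i) = 0) ∧ (∀ j, 0 ≤ eval x (g j)) ∧ 0 < eval x q)
    (sfeas : (Fin (n + 1) → ℝ) → Prop)
    (hsfeas : ∀ xt, sfeas xt ↔
      (∀ i, eval xt (Hh i) = 0) ∧ eval xt Q = 1 ∧
        (∀ j, 0 ≤ eval xt (Hg j)) ∧ 0 ≤ xt 0)
    (ρ : ℝ)
    (hr : IsGLB {v : ℝ | ∃ x, rfeas x ∧ v = eval x p / eval x q} ρ)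
    (hs : IsGLB {v : ℝ | ∃ xt, sfeas xt ∧ v = eval xt P} ρ)
    -- (i): no common real root of p and q in S
    (hnoroot : ¬ ∃ x : Fin n → ℝ,
      ((∀ i, eval x (h i) = 0) ∧ (∀ j, 0 ≤ eval x (g j))) ∧
        eval x p = 0 ∧ eval x q = 0)
    -- (ii): no common nonzero real root of p_d and q_d in Ŝ
    (hnoroothat : ¬ ∃ x : Fin n → ℝ, x ≠ 0 ∧
      ((∀ i, eval x (homogeneousComponent (h i).totalDegree (h i)) = 0) ∧
        (∀ j, 0 ≤ eval x (homogeneousComponent (g j).totalDegree (g j)))) ∧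
      eval x (homogeneousComponent d p) = 0 ∧
        eval x (homogeneousComponent d q) = 0) :
    ∃ xt, sfeas xt ∧ eval xt P = ρ :=
  homogenized_inf_attained_of_no_common_roots_general n m₁ m₂ p q h g d hd P Q hP hP1 hQ hQ1 Hh Hg
    hHh hHh1 hHg hHg1 sfeas hsfeas ρ hs hnoroot hnoroothat
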